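/- arXiv:0808.3676 — 4 statements merged into one kernel-verified Lean document; each statement's English description precedes it below -/
import Mathlib

section
/- Let d ≥ 2, f ≥ 1 be integers, n = d·f + 1, let r, s be real numbers with r ≠ s, and let M be a d×d real matrix all of whose entries lie in {0,1}. Set P₀ = r·M + s·(J − M). If P₀·J = −J and f·J + P₀·P₀ᵀ = n·I, then there exists a positive integer k such that k·(r − s) = −(s·d + 1) and M·J = k·J. In particular, −(s·d+1)/(r−s) is a positive integer. -/
open Matrix

/-- the common row sum `−(s·d+1)/(r−s)` of the 0-1 matrix `M` hidden in
the principal part `P₀ = r•M + s•(J−M)` is a positive integer `k`. -/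
theorem pseudocyclic_principal_part_row_sum_is_positive_integer
    (d f : ℕ) (hd : 2 ≤ d) (hf : 1 ≤ f)
    (r s : ℝ) (hrs : r ≠ s)
    (M J P₀ : Matrix (Fin d) (Fin d) ℝ)
    (hJ : ∀ i j, J i j = 1)
    (hM01 : ∀ i j, M i j = 0 ∨ M i j = 1)
    (hP : P₀ = r • M + s • (J - M))
    (horth1 : P₀ * J = -J)
    (horth2 : (f : ℝ) • J + P₀ * P₀ᵀ =
      ((d : ℝ) * (f : ℝ) + 1) • (1 : Matrix (Fin d) (Fin d) ℝ)) :
    ∃ k : ℕ, 0 < k ∧ (k : ℝ) * (r - s) = -(s * (d : ℝ) + 1) ∧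
      M * J = (k : ℝ) • J := by
  have hd0 : 0 < d := lt_of_lt_of_le (by norm_num) hd
  set S : Fin d → ℝ := fun i => ∑ j, M i j with hS
  have hrs' : r - s ≠ 0 := sub_ne_zero.mpr hrs
  -- key row-sum equation
  have key : ∀ i, (r - s) * S i + s * d = -1 := by
    intro i
    have h1 := congrFun (congrFun horth1 i) i
    rw [Matrix.mul_apply] at h1
    have h2 : ∀ j, P₀ i j * J j i = (r - s) * M i j + s := by
      intro j
      rw [hP, hJ]
      simp [Matrix.add_apply, Matrix.sub_apply, Matrix.smul_apply, smul_eq_mul, hJ]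
      ring
    rw [Finset.sum_congr rfl (fun j _ => h2 j)] at h1
    rw [Finset.sum_add_distrib, ← Finset.mul_sum, Finset.sum_const,
      Finset.card_univ, Fintype.card_fin, nsmul_eq_mul, mul_comm (d:ℝ) s] at h1
    simpa [Matrix.neg_apply, hJ] using h1
  -- natural-valued row sums
  set N : Fin d → ℕ := fun i => (Finset.univ.filter (fun j => M i j = 1)).card with hN
  have hNS : ∀ i, (N i : ℝ) = S i := by
    intro i
    have : ∀ j : Fin d, M i j = if M i j = 1 then (1:ℝ) else 0 := by
      intro j; rcases hM01 i j with h | h <;> simp [h]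
    rw [hS]
    simp only [hN]
    rw [Finset.sum_congr rfl (fun j _ => this j), Finset.sum_boole]
  obtain ⟨i0, i1, hi01⟩ : ∃ i0 i1 : Fin d, i0 ≠ i1 :=
    ⟨⟨0, hd0⟩, ⟨1, lt_of_lt_of_le (by norm_num) hd⟩, by simp [Fin.ext_iff]⟩
  -- all row sums equal
  have hSeq : ∀ i, S i = S i0 := by
    intro i
    have := key i
    have h0 := key i0
    have : (r - s) * S i = (r - s) * S i0 := by linarith
    exact mul_left_cancel₀ hrs' this
  refine ⟨N i0, ?_, ?_, ?_⟩
  · -- positivity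
    by_contra h
    push_neg at h
    interval_cases hk : (N i0)
    have hS0 : S i0 = 0 := by rw [← hNS i0, hk]; norm_num
    have hM0 : ∀ i j, M i j = 0 := by
      intro i j
      have hs : S i = 0 := by rw [hSeq i, hS0]
      have hnn : ∀ j ∈ (Finset.univ : Finset (Fin d)), 0 ≤ M i j := by
        intro j _; rcases hM01 i j with h | h <;> simp [h]
      have := (Finset.sum_eq_zero_iff_of_nonneg hnn).mp hs
      exact this j (Finset.mem_univ j)
    have h2 := congrFun (congrFun horth2 i0) i1
    have hP0 : ∀ i j, P₀ i j = s := by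
      intro i j
      rw [hP]
      simp [Matrix.add_apply, Matrix.sub_apply, Matrix.smul_apply, hM0, hJ]
    rw [Matrix.add_apply, Matrix.smul_apply, Matrix.mul_apply, Matrix.smul_apply,
      Matrix.one_apply_ne hi01, hJ] at h2
    simp only [Matrix.transpose_apply, hP0] at h2
    rw [Finset.sum_const, Finset.card_univ, Fintype.card_fin, nsmul_eq_mul,
      smul_eq_mul, smul_eq_mul, mul_one, mul_zero] at h2
    have hfpos : (1:ℝ) ≤ (f:ℝ) := by exact_mod_cast hf
    nlinarith [sq_nonneg s, (by exact_mod_cast hd0 : (0:ℝ) < d)]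
  · have := key i0
    rw [← hNS i0] at this
    linarith
  · ext i j
    rw [Matrix.mul_apply, Matrix.smul_apply, hJ, smul_eq_mul, mul_one]
    have : ∑ t, M i t * J t j = S i := by
      rw [hS]; exact Finset.sum_congr rfl (fun t _ => by rw [hJ, mul_one])
    rw [this, hSeq i, ← hNS i0]
end

section
/- Let d ≥ 2, f ≥ 1 be integers, n = d·f + 1, let r, s be real numbers with r ≠ s, and let M be a d×d real matrix all of whose entries lie in {0,1}. Set P₀ = r·M + s·(J − M). If P₀·J = −J and f·J + P₀·P₀ᵀ = n·I, then there exist integers k and λ with 0 ≤ λ < k < d such that M·J = k·J, J·M = k·J, and M·Mᵀ = (k − λ)·I + λ·J; in other words, M is an incidence matrix of a symmetric 2-(d,k,λ) design. -/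
/-!
Write `J = of 1` and `P₀ = (r - s) • M + s • J`. The first relation says that `M` has constant
row sums `k`; the second then gives `M * Mᵀ = α • 1 + γ • J` with `α = (d f + 1) / (r - s)² > 0`.
For a 0-1 matrix the diagonal entries of `M * Mᵀ` are the row sums and the off-diagonal ones
count the common ones of two rows, so `k = α + γ` and `λ = γ` are natural numbers with `λ < k`.
As `α • 1 + γ • J` is invertible, so is `M`, and cancelling `M` in `M * (Mᵀ * J) = (α + γ d) • J`
shows that `Mᵀ` has constant row sums as well; evaluating `J * Mᵀ * J` in two ways identifies
them with `k`, and yields `α + γ d = k²`, i.e. `λ (d - 1) = k (k - 1)`, which forces `k < d`.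
-/

open Matrix Finset

theorem Finset.sum_eq_card_filter_eq_one {ι R : Type*} [Fintype ι] [AddCommMonoidWithOne R]
    [DecidableEq R] {g : ι → R} (hg : ∀ l, g l = 0 ∨ g l = 1) : ∑ l, g l = #{l | g l = 1} := by
  rw [← sum_boole]
  exact sum_congr rfl fun l _ => by rcases hg l with h | h <;> simp [h]

namespace Matrix

variable {n R : Type*}

theorem transpose_of_one [One R] : (of 1 : Matrix n n R)ᵀ = of 1 := rfl

variable [Fintype n]

theorem mul_of_one_apply [NonAssocSemiring R] (A : Matrix n n R) (i j : n) :
    (A * of 1 : Matrix n n R) i j = ∑ l, A i l := by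
  simp [mul_apply]

theorem of_one_mul_of_one [NonAssocSemiring R] :
    (of 1 * of 1 : Matrix n n R) = (Fintype.card n : R) • of 1 := by
  ext i j
  simp [mul_of_one_apply]

theorem of_one_mul_transpose [CommSemiring R] (A : Matrix n n R) :
    of 1 * Aᵀ = (A * of 1)ᵀ := by
  rw [transpose_mul, transpose_of_one]

theorem mul_transpose_apply_eq_card_of_zero_or_one [NonAssocSemiring R] [DecidableEq R]
    {M : Matrix n n R} (hM : ∀ i j, M i j = 0 ∨ M i j = 1) (i j : n) :
    (M * Mᵀ) i j = #{l | M i l = 1 ∧ M j l = 1} := by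
  rw [mul_apply, ← sum_boole]
  refine sum_congr rfl fun l _ => ?_
  rcases hM i l with h | h <;> rcases hM j l with h' | h' <;> simp [h, h']

section Field

variable [Field R]

theorem exists_mul_of_one_eq_smul_of_principal_part {r s : R} (hrs : r ≠ s) {M : Matrix n n R}
    (h : (r • M + s • (of 1 - M)) * of 1 = -of 1) : ∃ k : R, M * of 1 = k • of 1 := by
  have hrs' : r - s ≠ 0 := sub_ne_zero.mpr hrs
  refine ⟨(-1 - s * Fintype.card n) / (r - s), smul_right_injective _ hrs' ?_⟩
  simp only [add_mul, smul_mul, sub_mul, of_one_mul_of_one] at h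
  dsimp only
  rw [smul_smul, mul_div_cancel₀ _ hrs']
  linear_combination (norm := module) h

variable [DecidableEq n]

theorem exists_mul_transpose_eq_of_principal_part {r s f m k : R} (hrs : r ≠ s)
    {M : Matrix n n R} (hk : M * of 1 = k • of 1)
    (h : f • of 1 + (r • M + s • (of 1 - M)) * (r • M + s • (of 1 - M))ᵀ = m • 1) :
    ∃ γ : R, M * Mᵀ = (m / (r - s) ^ 2) • 1 + γ • of 1 := by
  have hrs' : (r - s) ^ 2 ≠ 0 := pow_ne_zero 2 (sub_ne_zero.mpr hrs)
  have hP : r • M + s • (of 1 - M) = (r - s) • M + s • of 1 := by module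
  rw [hP] at h
  simp only [transpose_add, transpose_smul, transpose_of_one, add_mul, mul_add, smul_mul,
    Matrix.mul_smul, hk, of_one_mul_transpose, transpose_smul, of_one_mul_of_one, smul_smul] at h
  refine ⟨-(f + 2 * (r - s) * s * k + s ^ 2 * Fintype.card n) / (r - s) ^ 2,
    smul_right_injective _ hrs' ?_⟩
  dsimp only
  rw [smul_add, smul_smul, smul_smul, mul_div_cancel₀ _ hrs', mul_div_cancel₀ _ hrs']
  linear_combination (norm := module) h

theorem isUnit_smul_one_add_smul_of_one {α γ : R} (hα : α ≠ 0)
    (hαγ : α + γ * Fintype.card n ≠ 0) : IsUnit (α • 1 + γ • of 1 : Matrix n n R) := by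
  refine IsUnit.of_mul_eq_one (α⁻¹ • 1 - (γ / (α * (α + γ * Fintype.card n))) • of 1) ?_
  simp only [add_mul, mul_sub, smul_mul, Matrix.mul_smul, Matrix.one_mul, Matrix.mul_one,
    of_one_mul_of_one, smul_smul]
  match_scalars
  · field_simp
  · field_simp
    ring

section QuasiSymmetric

variable {M : Matrix n n R} {k α γ : R} (hk : M * of 1 = k • of 1) (hk0 : k ≠ 0)
  (hMM : M * Mᵀ = α • 1 + γ • of 1) (hα : α ≠ 0) (hαγ : α + γ * Fintype.card n ≠ 0)
include hk hk0 hMM hα hαγ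

theorem transpose_mul_of_one_eq_smul :
    Mᵀ * of 1 = ((α + γ * Fintype.card n) / k) • of 1 := by
  have hM : IsUnit M := isUnit_of_mul_isUnit_left (hMM ▸ isUnit_smul_one_add_smul_of_one hα hαγ)
  refine hM.mul_left_cancel ?_
  rw [← Matrix.mul_assoc, hMM, Matrix.mul_smul, hk, smul_smul, div_mul_cancel₀ _ hk0]
  simp only [add_mul, smul_mul, Matrix.one_mul, of_one_mul_of_one, smul_smul, add_smul]

variable [CharZero R] [Nonempty n]

theorem add_mul_card_eq_sq : α + γ * Fintype.card n = k ^ 2 := by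
  have hMt := transpose_mul_of_one_eq_smul hk hk0 hMM hα hαγ
  have hJ := congrArg (· (Classical.arbitrary n) (Classical.arbitrary n))
    (Matrix.mul_assoc (of 1) Mᵀ (of 1))
  simp only [of_one_mul_transpose, hk, hMt, transpose_smul, transpose_of_one, smul_mul,
    Matrix.mul_smul, of_one_mul_of_one, smul_apply, of_apply, Pi.one_apply, smul_eq_mul,
    mul_one] at hJ
  rw [sq, ← div_eq_iff hk0]
  exact mul_right_cancel₀ (by simp) hJ.symm

theorem of_one_mul_eq_smul : of 1 * M = k • of 1 := by
  have h := transpose_mul_of_one_eq_smul hk hk0 hMM hα hαγ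
  rw [add_mul_card_eq_sq hk hk0 hMM hα hαγ, sq, mul_div_cancel_right₀ _ hk0] at h
  rw [← transpose_transpose M, of_one_mul_transpose, h, transpose_smul, transpose_of_one]

end QuasiSymmetric

variable [LinearOrder R] [IsStrictOrderedRing R]

theorem exists_symmetric_design_params [Nontrivial n] {M : Matrix n n R} {k α γ : R}
    (hM : ∀ i j, M i j = 0 ∨ M i j = 1) (hk : M * of 1 = k • of 1)
    (hMM : M * Mᵀ = α • 1 + γ • of 1) (hα : 0 < α) :
    ∃ k₀ lam : ℤ, 0 ≤ lam ∧ lam < k₀ ∧ k₀ < (Fintype.card n : ℤ) ∧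
      M * of 1 = (k₀ : R) • of 1 ∧ of 1 * M = (k₀ : R) • of 1 ∧
      M * Mᵀ = ((k₀ : R) - lam) • 1 + (lam : R) • of 1 := by
  obtain ⟨i, j, hij⟩ := exists_pair_ne n
  set kN := #{l | M i l = 1}
  set lN := #{l | M i l = 1 ∧ M j l = 1}
  have hk_card : k = kN := by
    have h := congrFun₂ hk i i
    rw [mul_of_one_apply, sum_eq_card_filter_eq_one (hM i)] at h
    simpa using h.symm
  have hγ_card : γ = lN := by
    have h := congrFun₂ hMM i j
    rw [mul_transpose_apply_eq_card_of_zero_or_one hM] at h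
    simpa [one_apply_ne hij] using h.symm
  have hαγ : α + γ = k := by
    have h := congrFun₂ hMM i i
    rw [mul_transpose_apply_eq_card_of_zero_or_one hM] at h
    simpa [hk_card] using h.symm
  have hγ : 0 ≤ γ := hγ_card ▸ Nat.cast_nonneg _
  have hk0 : 0 < k := by linarith
  have hd : (2 : R) ≤ Fintype.card n := mod_cast Fintype.one_lt_card
  have hαγd : 0 < α + γ * Fintype.card n := by positivity
  have hsq := add_mul_card_eq_sq hk hk0.ne' hMM hα.ne' hαγd.ne'
  have hJM := of_one_mul_eq_smul hk hk0.ne' hMM hα.ne' hαγd.ne'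
  refine ⟨kN, lN, by positivity, ?_, ?_, ?_, ?_, ?_⟩
  · exact_mod_cast (show (lN : R) < kN by linarith)
  · exact_mod_cast (show (kN : R) < Fintype.card n by nlinarith)
  · simpa [← hk_card]
  · simpa [← hk_card]
  · simp only [Int.cast_natCast, ← hk_card, ← hγ_card, hMM, ← hαγ, add_sub_cancel_right]

end Field

end Matrix

theorem pseudocyclic_principal_part_is_symmetric_design_general
    (d f : ℕ) (hd : 2 ≤ d)
    (r s : ℝ) (hrs : r ≠ s)
    (M J P₀ : Matrix (Fin d) (Fin d) ℝ)
    (hJ : ∀ i j, J i j = 1)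
    (hM01 : ∀ i j, M i j = 0 ∨ M i j = 1)
    (hP : P₀ = r • M + s • (J - M))
    (horth1 : P₀ * J = -J)
    (horth2 : (f : ℝ) • J + P₀ * P₀ᵀ =
      ((d : ℝ) * (f : ℝ) + 1) • (1 : Matrix (Fin d) (Fin d) ℝ)) :
    ∃ k lam : ℤ, 0 ≤ lam ∧ lam < k ∧ k < (d : ℤ) ∧
      M * J = (k : ℝ) • J ∧
      J * M = (k : ℝ) • J ∧
      M * Mᵀ = ((k : ℝ) - (lam : ℝ)) • (1 : Matrix (Fin d) (Fin d) ℝ) + (lam : ℝ) • J := by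
  obtain rfl : J = of 1 := ext hJ
  subst hP
  have : Nontrivial (Fin d) := Fin.nontrivial_iff_two_le.mpr hd
  obtain ⟨k, hk⟩ := exists_mul_of_one_eq_smul_of_principal_part hrs horth1
  obtain ⟨γ, hMM⟩ := exists_mul_transpose_eq_of_principal_part hrs hk horth2
  simpa using exists_symmetric_design_params hM01 hk hMM (by positivity)

/-- the 0-1 matrix `M` hidden in the principal part `P₀ = r•M + s•(J−M)`
is an incidence matrix of a symmetric 2-(d,k,λ) design. -/
theorem pseudocyclic_principal_part_is_symmetric_design
    (d f : ℕ) (hd : 2 ≤ d) (hf : 1 ≤ f)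
    (r s : ℝ) (hrs : r ≠ s)
    (M J P₀ : Matrix (Fin d) (Fin d) ℝ)
    (hJ : ∀ i j, J i j = 1)
    (hM01 : ∀ i j, M i j = 0 ∨ M i j = 1)
    (hP : P₀ = r • M + s • (J - M))
    (horth1 : P₀ * J = -J)
    (horth2 : (f : ℝ) • J + P₀ * P₀ᵀ =
      ((d : ℝ) * (f : ℝ) + 1) • (1 : Matrix (Fin d) (Fin d) ℝ)) :
    ∃ k lam : ℤ, 0 ≤ lam ∧ lam < k ∧ k < (d : ℤ) ∧
      M * J = (k : ℝ) • J ∧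
      J * M = (k : ℝ) • J ∧
      M * Mᵀ = ((k : ℝ) - (lam : ℝ)) • (1 : Matrix (Fin d) (Fin d) ℝ) + (lam : ℝ) • J :=
  pseudocyclic_principal_part_is_symmetric_design_general d f hd r s hrs M J P₀ hJ hM01 hP horth1
    horth2
end

section
/- Let d, k, λ be integers with 0 ≤ λ < k < d, let r, s be real numbers, and let M be a d×d real matrix with entries in {0,1} satisfying M·J = k·J, J·M = k·J and M·Mᵀ = (k−λ)·I + λ·J (an incidence matrix of a symmetric 2-(d,k,λ) design). Assume the 0-th row of M is the indicator of the first k columns, i.e. M₀ⱼ = 1 if j < k and M₀ⱼ = 0 if j ≥ k. Set P₀ = r·M + s·(J − M), and let F be the d×3 matrix with Fⱼ₀ = 1 iff j = 0, Fⱼ₁ = 1 iff 1 ≤ j < k, and Fⱼ₂ = 1 iff j ≥ k (and all other entries 0). Then: (a) row 0 of P₀·F equals (r, (k−1)·r, (d−k)·s); (b) for every i ≠ 0 with Mᵢ₀ = 1, row i of P₀·F equals (r, (λ−1)·r + (k−λ)·s, (k−λ)·r + (d−2k+λ)·s); (c) for every i with Mᵢ₀ = 0, row i of P₀·F equals (s,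 λ·r + (k−1−λ)·s, (k−λ)·r + (d−2k+λ)·s). Consequently P₀·F has at most 3 distinct rows. -/
open Matrix

/-- the matrix `P₀·F` computed from an incidence matrix `M` of a symmetric
2-(d,k,λ) design (whose 0-th row is the indicator of the first `k` columns) has at most
three distinct rows, given explicitly, yielding a class-3 fusion scheme. -/
theorem design_fusion_class_three
    (d : ℕ) (k lam : ℤ) (hlam0 : 0 ≤ lam) (hlamk : lam < k) (hkd : k < (d : ℤ))
    [NeZero d]
    (r s : ℝ)
    (M J P₀ : Matrix (Fin d) (Fin d) ℝ)
    (hJ : ∀ i j, J i j = 1)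
    (hM01 : ∀ i j, M i j = 0 ∨ M i j = 1)
    (hMJ : M * J = (k : ℝ) • J)
    (hJM : J * M = (k : ℝ) • J)
    (hMMt : M * Mᵀ = ((k : ℝ) - (lam : ℝ)) • (1 : Matrix (Fin d) (Fin d) ℝ) + (lam : ℝ) • J)
    (hrow0 : ∀ j : Fin d, M 0 j = if ((j : ℕ) : ℤ) < k then 1 else 0)
    (hP : P₀ = r • M + s • (J - M))
    (F : Matrix (Fin d) (Fin 3) ℝ)
    (hF0 : ∀ j : Fin d, F j 0 = if j = 0 then 1 else 0)
    (hF1 : ∀ j : Fin d, F j 1 = if 1 ≤ ((j : ℕ) : ℤ) ∧ ((j : ℕ) : ℤ) < k then 1 else 0)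
    (hF2 : ∀ j : Fin d, F j 2 = if k ≤ ((j : ℕ) : ℤ) then 1 else 0) :
    ((P₀ * F) 0 0 = r ∧
     (P₀ * F) 0 1 = ((k : ℝ) - 1) * r ∧
     (P₀ * F) 0 2 = ((d : ℝ) - (k : ℝ)) * s) ∧
    (∀ i : Fin d, i ≠ 0 → M i 0 = 1 →
      (P₀ * F) i 0 = r ∧
      (P₀ * F) i 1 = ((lam : ℝ) - 1) * r + ((k : ℝ) - (lam : ℝ)) * s ∧
      (P₀ * F) i 2 = ((k : ℝ) - (lam : ℝ)) * r + ((d : ℝ) - 2 * (k : ℝ) + (lam : ℝ)) * s) ∧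
    (∀ i : Fin d, M i 0 = 0 →
      (P₀ * F) i 0 = s ∧
      (P₀ * F) i 1 = (lam : ℝ) * r + ((k : ℝ) - 1 - (lam : ℝ)) * s ∧
      (P₀ * F) i 2 = ((k : ℝ) - (lam : ℝ)) * r + ((d : ℝ) - 2 * (k : ℝ) + (lam : ℝ)) * s) := by
  have hk0 : (0:ℤ) < k := lt_of_le_of_lt hlam0 hlamk
  have hM00 : M 0 0 = 1 := by
    rw [hrow0]
    simp [hk0]
  -- row sums of M
  have hrowsum : ∀ i, ∑ j, M i j = (k : ℝ) := by
    intro i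
    have h := congrFun (congrFun hMJ i) 0
    simpa [Matrix.mul_apply, hJ] using h
  -- inner products with row 0
  have hT : ∀ i, ∑ j, M i j * M 0 j
      = ((k : ℝ) - (lam : ℝ)) * (if i = 0 then 1 else 0) + (lam : ℝ) := by
    intro i
    have h := congrFun (congrFun hMMt i) 0
    simpa [Matrix.mul_apply, Matrix.transpose_apply, Matrix.one_apply, hJ] using h
  -- sum of the indicator of {j < k}
  have hC : ∑ j : Fin d, (if ((j : ℕ) : ℤ) < k then (1:ℝ) else 0) = (k : ℝ) := by
    rw [← hrowsum 0]
    exact Finset.sum_congr rfl fun j _ => (hrow0 j).symm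
  have hS1 : ∀ i, ∑ j, M i j * (if ((j : ℕ) : ℤ) < k then (1:ℝ) else 0)
      = ((k : ℝ) - (lam : ℝ)) * (if i = 0 then 1 else 0) + (lam : ℝ) := by
    intro i
    rw [← hT i]
    exact Finset.sum_congr rfl fun j _ => by rw [hrow0 j]
  have hPapp : ∀ i j, P₀ i j = s + (r - s) * M i j := by
    intro i j
    rw [hP]
    simp [hJ]
    ring
  -- rewrite F columns in terms of the {j<k} indicator
  have hF1' : ∀ j : Fin d, F j 1
      = (if ((j : ℕ) : ℤ) < k then (1:ℝ) else 0) - (if j = 0 then 1 else 0) := by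
    intro j
    rw [hF1]
    by_cases h : j = 0
    · subst h
      simp [hk0]
    · have h1 : (1:ℤ) ≤ ((j : ℕ) : ℤ) := by
        have : (j : ℕ) ≠ 0 := fun hh => h (Fin.ext hh)
        omega
      simp [h, h1]
  have hF2' : ∀ j : Fin d, F j 2
      = 1 - (if ((j : ℕ) : ℤ) < k then (1:ℝ) else 0) := by
    intro j
    rw [hF2]
    by_cases h : ((j : ℕ) : ℤ) < k
    · simp [h, not_le.mpr h]
    · simp [h, not_lt.mp h]
  -- the three basic sums
  have hSum1 : ∀ i, ∑ j, P₀ i j * (if ((j : ℕ) : ℤ) < k then (1:ℝ) else 0)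
      = s * (k : ℝ)
        + (r - s) * (((k : ℝ) - (lam : ℝ)) * (if i = 0 then 1 else 0) + (lam : ℝ)) := by
    intro i
    have h : ∀ j : Fin d, P₀ i j * (if ((j : ℕ) : ℤ) < k then (1:ℝ) else 0)
        = s * (if ((j : ℕ) : ℤ) < k then (1:ℝ) else 0)
          + (r - s) * (M i j * (if ((j : ℕ) : ℤ) < k then (1:ℝ) else 0)) := by
      intro j; rw [hPapp]; ring
    rw [Finset.sum_congr rfl fun j _ => h j, Finset.sum_add_distrib,
      ← Finset.mul_sum, ← Finset.mul_sum, hC, hS1]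
  have hSumAll : ∀ i, ∑ j, P₀ i j = s * (d : ℝ) + (r - s) * (k : ℝ) := by
    intro i
    have h : ∀ j : Fin d, P₀ i j = s * 1 + (r - s) * M i j := by
      intro j; rw [hPapp]; ring
    rw [Finset.sum_congr rfl fun j _ => h j, Finset.sum_add_distrib,
      ← Finset.mul_sum, ← Finset.mul_sum, hrowsum]
    simp
  -- the entries of P₀ * F
  have hE0 : ∀ i, (P₀ * F) i 0 = s + (r - s) * M i 0 := by
    intro i
    rw [Matrix.mul_apply]
    simp only [hF0, mul_ite, mul_one, mul_zero]
    rw [Finset.sum_ite_eq' Finset.univ (0 : Fin d) (fun j => P₀ i j)]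
    simp [hPapp]
  have hE1 : ∀ i, (P₀ * F) i 1
      = (s * (k : ℝ)
          + (r - s) * (((k : ℝ) - (lam : ℝ)) * (if i = 0 then 1 else 0) + (lam : ℝ)))
        - (s + (r - s) * M i 0) := by
    intro i
    rw [Matrix.mul_apply]
    have h : ∀ j : Fin d, P₀ i j * F j 1
        = P₀ i j * (if ((j : ℕ) : ℤ) < k then (1:ℝ) else 0)
          - (if j = 0 then P₀ i j else 0) := by
      intro j
      rw [hF1']
      by_cases hj : j = 0 <;> simp [hj, hk0] <;> ring
    rw [Finset.sum_congr rfl fun j _ => h j, Finset.sum_sub_distrib, hSum1,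
      Finset.sum_ite_eq' Finset.univ (0 : Fin d) (fun j => P₀ i j)]
    simp [hPapp]
  have hE2 : ∀ i, (P₀ * F) i 2
      = (s * (d : ℝ) + (r - s) * (k : ℝ))
        - (s * (k : ℝ)
            + (r - s) * (((k : ℝ) - (lam : ℝ)) * (if i = 0 then 1 else 0) + (lam : ℝ))) := by
    intro i
    rw [Matrix.mul_apply]
    have h : ∀ j : Fin d, P₀ i j * F j 2
        = P₀ i j - P₀ i j * (if ((j : ℕ) : ℤ) < k then (1:ℝ) else 0) := by
      intro j
      rw [hF2']
      ring
    rw [Finset.sum_congr rfl fun j _ => h j, Finset.sum_sub_distrib, hSum1, hSumAll]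
  refine ⟨⟨?_, ?_, ?_⟩, fun i hi hMi => ⟨?_, ?_, ?_⟩, fun i hMi => ?_⟩
  · rw [hE0, hM00]; ring
  · rw [hE1]; simp [hM00]; ring
  · rw [hE2]; simp; ring
  · rw [hE0, hMi]; ring
  · rw [hE1, hMi]; simp [hi]; ring
  · rw [hE2]; simp [hi]; ring
  · have hi : i ≠ 0 := by
      intro h; rw [h, hM00] at hMi; norm_num at hMi
    exact ⟨by rw [hE0, hMi]; ring,
      by rw [hE1, hMi]; simp [hi]; ring,
      by rw [hE2]; simp [hi]; ring⟩
end

section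
/- Let q ≥ 1, d, k be integers, let r, s be real numbers, and let M be a d×d real matrix with entries in {0,1} such that every row of M has exactly k ones (M·J = k·J). Let L be a set of q+1 column indices, enumerated by a bijection ι : {0,…,q} → L, and assume that every row of M either contains all of L (Mᵢⱼ = 1 for all j ∈ L) or contains exactly one element of L. Set P₀ = r·M + s·(J − M), and let F₁ be the d×(q+2) matrix whose column 0 is the indicator vector of the complement of L and whose column c+1 (0 ≤ c ≤ q) is the standard basis vector supported at ι(c). Then: (a) if row i of M contains all of L, then (P₀·F₁)ᵢ₀ = (k−q−1)·r + (d−k)·s and (P₀·F₁)ᵢ,(c+1) = r for every c; (b) if row i of M meets L exactly in ι(c₀), then (P₀·F₁)ᵢ₀ = (k−1)·r + (d−k−q)·s, (P₀·F₁)ᵢ,(c₀+1) = r, and (P₀·F₁)ᵢ,(c+1) = s for every c ≠ c₀. Consequently P₀·F₁ has at most q+2 distinct rows. -/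
open Matrix

/-- for the hyperplane–point incidence matrix `M` of a projective space and
a line `L` (every row of `M` either contains all of `L` or exactly one point of `L`),
the matrix `P₀·F₁`, where `P₀ = r•M + s•(J−M)`, has at most `q+2` distinct rows, with the
explicit values below. -/
theorem line_fusion_eigenmatrix_rows
    (q : ℕ) (hq : 1 ≤ q) (d : ℕ) (k : ℤ)
    (r s : ℝ)
    (M J P₀ : Matrix (Fin d) (Fin d) ℝ)
    (hJ : ∀ i j, J i j = 1)
    (hM01 : ∀ i j, M i j = 0 ∨ M i j = 1)
    (hMJ : M * J = (k : ℝ) • J)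
    (L : Finset (Fin d)) (ι : Fin (q + 1) → Fin d)
    (hι : Function.Injective ι)
    (hL : L = Finset.image ι Finset.univ)
    (hrows : ∀ i : Fin d,
      (∀ c : Fin (q + 1), M i (ι c) = 1) ∨
      (∃ c₀ : Fin (q + 1), M i (ι c₀) = 1 ∧ ∀ c : Fin (q + 1), c ≠ c₀ → M i (ι c) = 0))
    (hP : P₀ = r • M + s • (J - M))
    (F₁ : Matrix (Fin d) (Fin (q + 2)) ℝ)
    (hF₁0 : ∀ j : Fin d, F₁ j 0 = if j ∈ L then 0 else 1)
    (hF₁succ : ∀ j : Fin d, ∀ c : Fin (q + 1),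
      F₁ j c.succ = if j = ι c then 1 else 0) :
    (∀ i : Fin d, (∀ c : Fin (q + 1), M i (ι c) = 1) →
      (P₀ * F₁) i 0 = ((k : ℝ) - (q : ℝ) - 1) * r + ((d : ℝ) - (k : ℝ)) * s ∧
      ∀ c : Fin (q + 1), (P₀ * F₁) i c.succ = r) ∧
    (∀ i : Fin d, ∀ c₀ : Fin (q + 1),
      (M i (ι c₀) = 1 ∧ ∀ c : Fin (q + 1), c ≠ c₀ → M i (ι c) = 0) →
      (P₀ * F₁) i 0 = ((k : ℝ) - 1) * r + ((d : ℝ) - (k : ℝ) - (q : ℝ)) * s ∧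
      (P₀ * F₁) i c₀.succ = r ∧
      ∀ c : Fin (q + 1), c ≠ c₀ → (P₀ * F₁) i c.succ = s) := by
  have hPentry : ∀ i j, P₀ i j = r * M i j + s * (1 - M i j) := by
    intro i j
    simp [hP, hJ i j, Matrix.add_apply, Matrix.sub_apply, Matrix.smul_apply, smul_eq_mul]
  have hsumM : ∀ i, ∑ j, M i j = (k : ℝ) := by
    intro i
    have h := congrFun (congrFun hMJ i) i
    simpa [Matrix.mul_apply, hJ, Matrix.smul_apply, smul_eq_mul] using h
  have hsumP : ∀ i, ∑ j, P₀ i j = r * k + s * ((d : ℝ) - k) := by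
    intro i
    simp only [hPentry]
    rw [Finset.sum_add_distrib, ← Finset.mul_sum, ← Finset.mul_sum, hsumM,
      Finset.sum_sub_distrib, hsumM, Finset.sum_const, Finset.card_univ]
    simp
  have hsucc : ∀ i c, (P₀ * F₁) i c.succ = P₀ i (ι c) := by
    intro i c
    simp [Matrix.mul_apply, hF₁succ, mul_ite, mul_one, mul_zero]
  have hcol0 : ∀ i, (P₀ * F₁) i 0
      = ∑ j, P₀ i j - ∑ c : Fin (q + 1), P₀ i (ι c) := by
    intro i
    have himg : ∑ c : Fin (q + 1), P₀ i (ι c) = ∑ j ∈ L, P₀ i j := by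
      rw [hL, Finset.sum_image (fun a _ b _ h => hι h)]
    rw [himg]
    have : (P₀ * F₁) i 0 = ∑ j, (P₀ i j - if j ∈ L then P₀ i j else 0) := by
      simp only [Matrix.mul_apply, hF₁0]
      congr 1; ext j
      by_cases hjL : j ∈ L <;> simp [hjL]
    rw [this, Finset.sum_sub_distrib, Finset.sum_ite_mem, Finset.univ_inter]
  constructor
  · intro i hi
    constructor
    · rw [hcol0 i, hsumP i]
      have : ∑ c : Fin (q + 1), P₀ i (ι c) = ((q : ℝ) + 1) * r := by
        have : ∀ c : Fin (q + 1), P₀ i (ι c) = r := by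
          intro c; rw [hPentry, hi c]; ring
        rw [Finset.sum_congr rfl (fun c _ => this c), Finset.sum_const,
          Finset.card_univ]
        simp
      rw [this]; ring
    · intro c
      rw [hsucc, hPentry, hi c]; ring
  · intro i c₀ ⟨h1, h0⟩
    have hsum : ∑ c : Fin (q + 1), P₀ i (ι c) = r + (q : ℝ) * s := by
      rw [← Finset.add_sum_erase Finset.univ _ (Finset.mem_univ c₀)]
      have : ∑ c ∈ Finset.univ.erase c₀, P₀ i (ι c) = (q : ℝ) * s := by
        rw [Finset.sum_congr rfl (fun c hc => by
          rw [hPentry, h0 c (Finset.ne_of_mem_erase hc)]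
          try ring)]
        rw [Finset.sum_const, Finset.card_erase_of_mem (Finset.mem_univ c₀),
          Finset.card_univ]
        simp [mul_comm]
      rw [this, hPentry, h1]
      ring_nf
    refine ⟨?_, ?_, ?_⟩
    · rw [hcol0 i, hsumP i, hsum]; ring
    · rw [hsucc, hPentry, h1]; ring
    · intro c hc
      rw [hsucc, hPentry, h0 c hc]; ring
end
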